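/- Let d ≥ 2 and let A and B be k×k matrices with entries in {0,1} such that B is irreducible and A > B (i.e., A_{i,j} ≥ B_{i,j} for all i,j with strict inequality for at least one pair). Then h(T_A) > h(T_B). -/

import Mathlib

open Filter Real

/-- `treeP d M n i` = number of `n`-blocks of the hom Markov tree-shift `T_M`
on the `d`-tree whose root label is `i`. -/
def treeP (d : ℕ) {ι : Type} [Fintype ι] (M : Matrix ι ι ℕ) : ℕ → ι → ℕ
  | 0, _ => 1
  | n + 1, i => (∑ j, M i j * treeP d M n j) ^ d

/-- `|Δ_n| = 1 + d + ⋯ + d^n`. -/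
def deltaCard (d n : ℕ) : ℕ := ∑ i ∈ Finset.range (n + 1), d ^ i

/-- Topological entropy of the hom Markov tree-shift `T_M` on the `d`-tree. -/
noncomputable def treeEntropy (d : ℕ) {ι : Type} [Fintype ι] (M : Matrix ι ι ℕ) : ℝ :=
  Filter.limsup (fun n => Real.log (∑ i, treeP d M n i) / (deltaCard d n : ℝ)) Filter.atTop

/-- `M` has entries in `{0,1}`. -/
def IsBinary {ι : Type} [Fintype ι] (M : Matrix ι ι ℕ) : Prop := ∀ i j, M i j ≤ 1

/-- `M` is irreducible. -/
def MatIrreducible {ι : Type} [Fintype ι] [DecidableEq ι] (M : Matrix ι ι ℕ) : Prop :=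
  ∀ i j, ∃ n, 1 ≤ n ∧ 0 < (M ^ n) i j

/-- `M` is the block matrix `[[E_a, R],[O, E_b]]` with `R` binary of constant row sum `l`. -/
def IsMabl (a b l : ℕ) (M : Matrix (Fin (a + b)) (Fin (a + b)) ℕ) : Prop :=
  (∀ i j, M i j ≤ 1) ∧
  (∀ i j : Fin (a + b), (i : ℕ) < a → (j : ℕ) < a → M i j = 1) ∧
  (∀ i j : Fin (a + b), a ≤ (i : ℕ) → a ≤ (j : ℕ) → M i j = 1) ∧
  (∀ i j : Fin (a + b), a ≤ (i : ℕ) → (j : ℕ) < a → M i j = 0) ∧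
  (∀ i : Fin (a + b), (i : ℕ) < a → (∑ j : Fin (a + b), if a ≤ (j : ℕ) then M i j else 0) = l)



/-!
If `B` is irreducible and `A` has an extra `1`, then `p_{B;i}(K) < p_{A;i}(K)` for every root
label `i` at some common depth `K`: the extra entry makes the count strictly larger at its row,
and irreducibility carries strictness back along walks of `B` to every row. Hence
`γ · p_{B;i}(K) ≤ p_{A;i}(K)` for some `γ > 1`, and since the recursion raises everything to the
`d`-th power this improves to `γ^(d^t) · p_{B;i}(K + t) ≤ p_{A;i}(K + t)`. Taking logarithms and
dividing by `|Δ_{K+t}| < d^(K+t+1)` gives `h(T_B) + log γ / d^(K+1) ≤ h(T_A)`.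
-/

open Topology Finset

lemma deltaCard_succ (d n : ℕ) : deltaCard d (n + 1) = deltaCard d n * d + 1 := by
  simp only [deltaCard, sum_range_succ' _ (n + 1), pow_succ, ← sum_mul, pow_zero]

lemma deltaCard_pos (d n : ℕ) : 0 < deltaCard d n := by
  rw [deltaCard, sum_range_succ']
  exact Nat.lt_add_left _ (by simp)

lemma deltaCard_lt_pow {d : ℕ} (hd : 2 ≤ d) (n : ℕ) : deltaCard d n < d ^ (n + 1) :=
  Nat.geomSum_lt hd fun _ hk => mem_range.1 hk

lemma exists_one_lt_forall_mul_le {ι : Type*} [Finite ι] {a b : ι → ℝ} (h : ∀ i, a i < b i) :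
    ∃ γ > 1, ∀ i, γ * a i ≤ b i := by
  have hnear : ∀ᶠ γ in 𝓝[>] (1 : ℝ), ∀ i, γ * a i < b i :=
    nhdsWithin_le_nhds <| eventually_all.2 fun i =>
      (continuous_id.mul continuous_const).continuousAt.eventually_lt continuousAt_const
        (by simpa using h i)
  obtain ⟨γ, hγb, hγ⟩ := (hnear.and self_mem_nhdsWithin).exists
  exact ⟨γ, hγ, fun i => (hγb i).le⟩

lemma limsup_add_le_limsup {α : Type*} {l : Filter α} [NeBot l] {f g : α → ℝ} {b c : ℝ}
    (hf : ∀ᶠ x in l, b ≤ f x) (hg : IsBoundedUnder (· ≤ ·) l g)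
    (h : ∀ᶠ x in l, f x + c ≤ g x) : limsup f l + c ≤ limsup g l := by
  obtain ⟨B, hB⟩ := hg
  have hf_bdd : IsBoundedUnder (· ≤ ·) l f :=
    isBoundedUnder_of_eventually_le (a := B - c)
      ((eventually_map.1 hB).and h |>.mono fun _ hx => by linarith [hx.1, hx.2])
  rw [← limsup_add_const l f c hf_bdd (isCoboundedUnder_le_of_eventually_le l hf)]
  exact limsup_le_limsup h
    (isCoboundedUnder_le_of_eventually_le l (x := b + c) (hf.mono fun _ hx => by linarith)) ⟨B, hB⟩

section treeP

variable {ι : Type} [Fintype ι] {d : ℕ}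

lemma treeP_succ (M : Matrix ι ι ℕ) (n : ℕ) (i : ι) :
    treeP d M (n + 1) i = (∑ j, M i j * treeP d M n j) ^ d := rfl

lemma treeP_succ_le_sum_pow {M : Matrix ι ι ℕ} (hM : IsBinary M) (n : ℕ) (i : ι) :
    treeP d M (n + 1) i ≤ (∑ j, treeP d M n j) ^ d := by
  rw [treeP_succ]
  gcongr with j
  exact mul_le_of_le_one_left (Nat.zero_le _) (hM i j)

lemma sum_treeP_le_card_pow {M : Matrix ι ι ℕ} (hM : IsBinary M) (n : ℕ) :
    ∑ i, treeP d M n i ≤ Fintype.card ι ^ deltaCard d n := by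
  induction n with
  | zero => simp [treeP, deltaCard]
  | succ n ih =>
    calc ∑ i, treeP d M (n + 1) i ≤ ∑ _i : ι, (∑ j, treeP d M n j) ^ d :=
          sum_le_sum fun i _ => treeP_succ_le_sum_pow hM n i
      _ ≤ Fintype.card ι * (Fintype.card ι ^ deltaCard d n) ^ d := by
          rw [sum_const, card_univ, smul_eq_mul]; gcongr
      _ = Fintype.card ι ^ deltaCard d (n + 1) := by rw [deltaCard_succ]; ring

lemma treeP_pos {M : Matrix ι ι ℕ} (hM : ∀ i, ∃ j, 0 < M i j) (n : ℕ) (i : ι) :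
    0 < treeP d M n i := by
  induction n generalizing i with
  | zero => exact Nat.one_pos
  | succ n ih =>
    obtain ⟨j, hj⟩ := hM i
    exact pow_pos (sum_pos' (fun _ _ => Nat.zero_le _) ⟨j, mem_univ j, Nat.mul_pos hj (ih j)⟩) d

variable {A B : Matrix ι ι ℕ}

lemma treeP_mono (hle : ∀ i j, B i j ≤ A i j) (n : ℕ) (i : ι) :
    treeP d B n i ≤ treeP d A n i := by
  induction n generalizing i with
  | zero => rfl
  | succ n ih =>
    rw [treeP_succ, treeP_succ]
    gcongr with j
    exacts [hle i j, ih j]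

lemma treeP_succ_lt (hd : d ≠ 0) (hle : ∀ i j, B i j ≤ A i j) {n : ℕ} {i j : ι}
    (h : B i j * treeP d B n j < A i j * treeP d A n j) :
    treeP d B (n + 1) i < treeP d A (n + 1) i := by
  rw [treeP_succ, treeP_succ]
  refine Nat.pow_lt_pow_left (sum_lt_sum (fun l _ => ?_) ⟨j, mem_univ j, h⟩) hd
  exact Nat.mul_le_mul (hle i l) (treeP_mono hle n l)

lemma treeP_mul_pow_le (hle : ∀ i j, B i j ≤ A i j) {γ : ℝ} (hγ : 0 ≤ γ) {K : ℕ}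
    (hK : ∀ i, γ * treeP d B K i ≤ treeP d A K i) (t : ℕ) (i : ι) :
    γ ^ d ^ t * treeP d B (K + t) i ≤ treeP d A (K + t) i := by
  induction t generalizing i with
  | zero => simpa using hK i
  | succ t ih =>
    rw [← add_assoc, treeP_succ, treeP_succ, pow_succ, pow_mul]
    push_cast
    rw [← mul_pow, mul_sum]
    refine pow_le_pow_left₀ (by positivity) (sum_le_sum fun j _ => ?_) d
    calc γ ^ d ^ t * ((B i j : ℝ) * treeP d B (K + t) j)
        = B i j * (γ ^ d ^ t * treeP d B (K + t) j) := by ring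
      _ ≤ A i j * (treeP d A (K + t) j : ℝ) := by
          gcongr
          · exact_mod_cast hle i j
          · exact ih j

variable [DecidableEq ι]

lemma MatIrreducible.exists_pos {M : Matrix ι ι ℕ} (hM : MatIrreducible M) (i : ι) :
    ∃ j, 0 < M i j := by
  obtain ⟨n, hn, hpos⟩ := hM i i
  obtain ⟨m, rfl⟩ := Nat.exists_eq_add_of_le' hn
  rw [pow_succ', Matrix.mul_apply] at hpos
  obtain ⟨j, -, hj⟩ := exists_ne_zero_of_sum_ne_zero hpos.ne'
  exact ⟨j, Nat.pos_of_ne_zero (left_ne_zero_of_mul hj)⟩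

lemma treeP_add_lt_of_pow_pos (hd : d ≠ 0) (hle : ∀ i j, B i j ≤ A i j) {m n : ℕ} {i j : ι}
    (hB : 0 < (B ^ m) i j) (h : treeP d B n j < treeP d A n j) :
    treeP d B (n + m) i < treeP d A (n + m) i := by
  induction m generalizing i with
  | zero =>
    obtain rfl : i = j := by
      by_contra hne
      simp [Matrix.one_apply_ne hne] at hB
    exact h
  | succ m ih =>
    rw [pow_succ', Matrix.mul_apply] at hB
    obtain ⟨l, -, hl⟩ := exists_ne_zero_of_sum_ne_zero hB.ne'
    have hil : 0 < B i l := Nat.pos_of_ne_zero (left_ne_zero_of_mul hl)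
    have hlj := ih (Nat.pos_of_ne_zero (right_ne_zero_of_mul hl))
    exact treeP_succ_lt hd hle
      (((Nat.mul_lt_mul_left hil).2 hlj).trans_le (Nat.mul_le_mul_right _ (hle i l)))

lemma exists_forall_treeP_lt (hd : d ≠ 0) (hle : ∀ i j, B i j ≤ A i j)
    (hirr : MatIrreducible B) {i₀ j₀ : ι} (hlt : B i₀ j₀ < A i₀ j₀) :
    ∃ K, ∀ i, treeP d B K i < treeP d A K i := by
  have hroot (t : ℕ) : treeP d B (t + 1) i₀ < treeP d A (t + 1) i₀ :=
    treeP_succ_lt hd hle <| Nat.mul_lt_mul_of_lt_of_le hlt (treeP_mono hle t j₀)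
      ((treeP_pos hirr.exists_pos t j₀).trans_le (treeP_mono hle t j₀))
  choose m hm using (hirr · i₀)
  refine ⟨univ.sup m + 1, fun i => ?_⟩
  have hmi : m i ≤ univ.sup m := le_sup (mem_univ i)
  obtain ⟨t, ht⟩ : ∃ t, univ.sup m + 1 = t + 1 + m i := ⟨univ.sup m - m i, by omega⟩
  rw [ht]
  exact treeP_add_lt_of_pow_pos hd hle (hm i).2 (hroot t)

end treeP

section entropy

variable {ι : Type} [Fintype ι] {d : ℕ}

noncomputable def blockEntropy (d : ℕ) (M : Matrix ι ι ℕ) (n : ℕ) : ℝ :=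
  log (∑ i, treeP d M n i) / (deltaCard d n : ℝ)

lemma treeEntropy_eq_limsup (M : Matrix ι ι ℕ) :
    treeEntropy d M = limsup (blockEntropy d M) atTop := rfl

lemma blockEntropy_nonneg (M : Matrix ι ι ℕ) (n : ℕ) : 0 ≤ blockEntropy d M n :=
  div_nonneg (by rw [← Nat.cast_sum]; exact log_natCast_nonneg _) (Nat.cast_nonneg _)

lemma blockEntropy_le_log_card {M : Matrix ι ι ℕ} (hM : IsBinary M) (n : ℕ) :
    blockEntropy d M n ≤ log (Fintype.card ι) := by
  rw [blockEntropy, div_le_iff₀ (by exact_mod_cast deltaCard_pos d n), ← Nat.cast_sum]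
  rcases (∑ i, treeP d M n i).eq_zero_or_pos with h | h
  · rw [h, Nat.cast_zero, log_zero]
    exact mul_nonneg (log_natCast_nonneg _) (Nat.cast_nonneg _)
  · calc log ↑(∑ i, treeP d M n i) ≤ log ((Fintype.card ι : ℝ) ^ deltaCard d n) :=
          log_le_log (by exact_mod_cast h) (by exact_mod_cast sum_treeP_le_card_pow hM n)
      _ = log (Fintype.card ι) * deltaCard d n := by rw [log_pow, mul_comm]

lemma blockEntropy_add_le (hd : 2 ≤ d) {A B : Matrix ι ι ℕ} {γ : ℝ} (hγ : 1 ≤ γ) {K t : ℕ}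
    (hB : 0 < ∑ i, (treeP d B (K + t) i : ℝ))
    (h : γ ^ d ^ t * ∑ i, (treeP d B (K + t) i : ℝ) ≤ ∑ i, (treeP d A (K + t) i : ℝ)) :
    blockEntropy d B (K + t) + log γ / (d : ℝ) ^ (K + 1) ≤ blockEntropy d A (K + t) := by
  have hΔ : (0 : ℝ) < deltaCard d (K + t) := Nat.cast_pos.2 (deltaCard_pos d (K + t))
  have hΔ_le : (deltaCard d (K + t) : ℝ) ≤ (d : ℝ) ^ t * (d : ℝ) ^ (K + 1) :=
    calc (deltaCard d (K + t) : ℝ) ≤ (d : ℝ) ^ (K + t + 1) := by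
          exact_mod_cast (deltaCard_lt_pow hd (K + t)).le
      _ = (d : ℝ) ^ t * (d : ℝ) ^ (K + 1) := by ring
  set Δ : ℝ := (deltaCard d (K + t) : ℝ)
  have hlog : (d : ℝ) ^ t * log γ + log (∑ i, treeP d B (K + t) i)
      ≤ log (∑ i, treeP d A (K + t) i) := by
    rw [← Nat.cast_pow, ← log_pow, ← log_mul (by positivity) hB.ne']
    exact log_le_log (by positivity) h
  have hgap : log γ / (d : ℝ) ^ (K + 1) ≤ (d : ℝ) ^ t * log γ / Δ := by
    rw [div_le_div_iff₀ (by positivity) hΔ]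
    nlinarith [log_nonneg hγ]
  calc blockEntropy d B (K + t) + log γ / (d : ℝ) ^ (K + 1)
      ≤ log (∑ i, treeP d B (K + t) i) / Δ + (d : ℝ) ^ t * log γ / Δ := by
        rw [blockEntropy]; gcongr
    _ = ((d : ℝ) ^ t * log γ + log (∑ i, treeP d B (K + t) i)) / Δ := by ring
    _ ≤ blockEntropy d A (K + t) := by rw [blockEntropy]; gcongr

end entropy

theorem treeEntropy_strictMono_general {d k : ℕ} (hd : 2 ≤ d)
    (A B : Matrix (Fin k) (Fin k) ℕ) (hA : IsBinary A)
    (hirr : MatIrreducible B)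
    (hle : ∀ i j, B i j ≤ A i j) (hlt : ∃ i j, B i j < A i j) :
    treeEntropy d B < treeEntropy d A := by
  obtain ⟨i₀, j₀, hij⟩ := hlt
  obtain ⟨K, hK⟩ := exists_forall_treeP_lt (d := d) (by omega) hle hirr hij
  obtain ⟨γ, hγ, hγK⟩ := exists_one_lt_forall_mul_le fun i => (Nat.cast_lt (α := ℝ)).2 (hK i)
  have hgap : ∀ᶠ n in atTop, blockEntropy d B n + log γ / (d : ℝ) ^ (K + 1)
      ≤ blockEntropy d A n := by
    refine eventually_atTop.2 ⟨K, fun n hn => ?_⟩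
    obtain ⟨t, rfl⟩ := Nat.exists_eq_add_of_le hn
    refine blockEntropy_add_le hd hγ.le
      (sum_pos (fun i _ => Nat.cast_pos.2 (treeP_pos hirr.exists_pos _ i)) ⟨i₀, mem_univ i₀⟩) ?_
    rw [mul_sum]
    exact sum_le_sum fun i _ => treeP_mul_pow_le hle (by positivity) hγK t i
  have hc : 0 < log γ / (d : ℝ) ^ (K + 1) :=
    div_pos (log_pos hγ) (pow_pos (Nat.cast_pos.2 (by omega)) _)
  have hlimsup := limsup_add_le_limsup (Eventually.of_forall (blockEntropy_nonneg B))
    (isBoundedUnder_of ⟨_, blockEntropy_le_log_card hA⟩) hgap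
  rw [treeEntropy_eq_limsup, treeEntropy_eq_limsup]
  linarith

/-- **Theorem 2.2 (strict monotonicity).** If `B` is binary irreducible and `A > B`
entrywise (both binary), then `h(T_A) > h(T_B)`. -/
theorem treeEntropy_strictMono {d k : ℕ} (hd : 2 ≤ d)
    (A B : Matrix (Fin k) (Fin k) ℕ) (hA : IsBinary A) (hB : IsBinary B)
    (hirr : MatIrreducible B)
    (hle : ∀ i j, B i j ≤ A i j) (hlt : ∃ i j, B i j < A i j) :
    treeEntropy d B < treeEntropy d A :=
  treeEntropy_strictMono_general hd A B hA hirr hle hlt
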